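/- Let P be a general atom. Then CL2 proves P∧P→P, P∨¬P, and P→P⊓P, but CL2 does not prove P→P∧P and does not prove P⊔¬P. -/

import Mathlib

namespace CoL

/-- CL2-formulas: built from the logical atoms ⊤, ⊥, nonlogical elementary atoms
(`eatom`) and general atoms (`gatom`) by ¬, ∧, ∨, ⊓ (`cand`), ⊔ (`cor`).
`F → G` abbreviates `(¬F) ∨ G`. -/
inductive GF : Type
  | top : GF
  | bot : GF
  | eatom (n : ℕ) : GF
  | gatom (n : ℕ) : GF
  | neg (f : GF) : GF
  | and (f g : GF) : GF
  | or (f g : GF) : GF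
  | cand (f g : GF) : GF
  | cor (f g : GF) : GF
deriving DecidableEq

/-- `F → G` abbreviates `(¬F) ∨ G`. -/
def GF.imp (f g : GF) : GF := .or (.neg f) g

/-- Classical evaluation under an assignment to the elementary atoms (the clauses
for ⊓, ⊔ and general atoms are irrelevant junk: evaluation is only ever used on
elementarizations, which contain none of these). -/
def GF.eval (v : ℕ → Bool) : GF → Bool
  | .top => true
  | .bot => false
  | .eatom n => v n
  | .gatom _ => false
  | .neg f => !f.eval v
  | .and f g => f.eval v && g.eval v
  | .or f g => f.eval v || g.eval v
  | .cand _ _ => false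
  | .cor _ _ => false

/-- Classical tautology: true under every assignment. -/
def GF.Taut (f : GF) : Prop := ∀ v : ℕ → Bool, f.eval v = true

/-- The elementarization of a CL2-formula (with `pol` the polarity of the context,
`true` = positive): every surface occurrence of `G⊓H` is replaced by ⊤, every
surface occurrence of `G⊔H` by ⊥, every positive surface occurrence of a general
atom by ⊥ and every negative surface occurrence of a general atom by ⊤. -/
def GF.elem : Bool → GF → GF
  | _, .top => .top
  | _, .bot => .bot
  | _, .eatom n => .eatom n
  | pol, .gatom _ => if pol then .bot else .top
  | pol, .neg f => .neg (GF.elem (!pol) f)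
  | pol, .and f g => .and (GF.elem pol f) (GF.elem pol g)
  | pol, .or f g => .or (GF.elem pol f) (GF.elem pol g)
  | _, .cand _ _ => .top
  | _, .cor _ _ => .bot

/-- A CL2-formula is stable iff its elementarization is a classical tautology. -/
def GF.Stable (f : GF) : Prop := (GF.elem true f).Taut

/-- The elementary atom `q` occurs in the formula. -/
def GF.OccursE (q : ℕ) : GF → Prop
  | .top => False
  | .bot => False
  | .eatom n => n = q
  | .gatom _ => False
  | .neg f => f.OccursE q
  | .and f g => f.OccursE q ∨ g.OccursE q
  | .or f g => f.OccursE q ∨ g.OccursE q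
  | .cand f g => f.OccursE q ∨ g.OccursE q
  | .cor f g => f.OccursE q ∨ g.OccursE q

/-- `RuleAPrem pol F H`: `H` is the result of replacing in `F` one surface
occurrence of a subformula `G₁⊓G₂` occurring positively (resp. of `G₁⊔G₂`
occurring negatively) by `G_i`; `pol` is the polarity of the context. -/
inductive RuleAPrem : Bool → GF → GF → Prop
  | cand1 (g₁ g₂) : RuleAPrem true (.cand g₁ g₂) g₁
  | cand2 (g₁ g₂) : RuleAPrem true (.cand g₁ g₂) g₂
  | cor1 (g₁ g₂) : RuleAPrem false (.cor g₁ g₂) g₁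
  | cor2 (g₁ g₂) : RuleAPrem false (.cor g₁ g₂) g₂
  | negc {pol f h} : RuleAPrem (!pol) f h → RuleAPrem pol (.neg f) (.neg h)
  | andl {pol f h} (g) : RuleAPrem pol f h → RuleAPrem pol (.and f g) (.and h g)
  | andr {pol f h} (g) : RuleAPrem pol f h → RuleAPrem pol (.and g f) (.and g h)
  | orl {pol f h} (g) : RuleAPrem pol f h → RuleAPrem pol (.or f g) (.or h g)
  | orr {pol f h} (g) : RuleAPrem pol f h → RuleAPrem pol (.or g f) (.or g h)

/-- `RuleBPrem pol F H`: `H` is the result of replacing in `F` one surface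
occurrence of a subformula `G₁⊓G₂` occurring negatively (resp. of `G₁⊔G₂`
occurring positively) by `G_i`. -/
inductive RuleBPrem : Bool → GF → GF → Prop
  | cand1 (g₁ g₂) : RuleBPrem false (.cand g₁ g₂) g₁
  | cand2 (g₁ g₂) : RuleBPrem false (.cand g₁ g₂) g₂
  | cor1 (g₁ g₂) : RuleBPrem true (.cor g₁ g₂) g₁
  | cor2 (g₁ g₂) : RuleBPrem true (.cor g₁ g₂) g₂
  | negc {pol f h} : RuleBPrem (!pol) f h → RuleBPrem pol (.neg f) (.neg h)
  | andl {pol f h} (g) : RuleBPrem pol f h → RuleBPrem pol (.and f g) (.and h g)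
  | andr {pol f h} (g) : RuleBPrem pol f h → RuleBPrem pol (.and g f) (.and g h)
  | orl {pol f h} (g) : RuleBPrem pol f h → RuleBPrem pol (.or f g) (.or h g)
  | orr {pol f h} (g) : RuleBPrem pol f h → RuleBPrem pol (.or g f) (.or g h)

/-- `RepG P q occ pol F F'`: `F'` is the result of replacing in `F` one surface
occurrence of the general atom `P`, of polarity `occ` relative to the context
polarity `pol`, by the elementary atom `q`. -/
inductive RepG (P q : ℕ) : Bool → Bool → GF → GF → Prop
  | here (pol) : RepG P q pol pol (.gatom P) (.eatom q)
  | negc {occ pol f h} : RepG P q occ (!pol) f h → RepG P q occ pol (.neg f) (.neg h)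
  | andl {occ pol f h} (g) : RepG P q occ pol f h → RepG P q occ pol (.and f g) (.and h g)
  | andr {occ pol f h} (g) : RepG P q occ pol f h → RepG P q occ pol (.and g f) (.and g h)
  | orl {occ pol f h} (g) : RepG P q occ pol f h → RepG P q occ pol (.or f g) (.or h g)
  | orr {occ pol f h} (g) : RepG P q occ pol f h → RepG P q occ pol (.or g f) (.or g h)

/-- Provability in CL2: Rules (a) and (b) as in CL1, plus Rule (c): `F` follows
from the result `F'` of replacing in `F` one positive and one negative surface
occurrence of some general atom `P` by a nonlogical elementary atom `q` not
occurring in `F`. -/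
inductive CL2Prov : GF → Prop
  | ruleA {f} : f.Stable → (∀ h, RuleAPrem true f h → CL2Prov h) → CL2Prov f
  | ruleB {f h} : RuleBPrem true f h → CL2Prov h → CL2Prov f
  | ruleC {f g f' : GF} (P q : ℕ) : ¬ f.OccursE q →
      RepG P q true true f g → RepG P q false true g f' → CL2Prov f' → CL2Prov f

/-! A choice-free formula can only be proved by Rule (c) steps followed by Rule (a) with no
premises. Each Rule (c) step consumes one positive and one negative occurrence of a general atom,
and once one polarity is exhausted only stability is left to check. In `P → P ∧ P` the single
negative `P` can be matched with only one conjunct; making the fresh atom true then leaves the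
other conjunct false. `P ⊔ ¬P` can only be reduced by Rule (b) to `P` or `¬P`, neither stable. -/

def GF.HasSurfaceChoice : GF → Prop
  | .neg f => f.HasSurfaceChoice
  | .and f g => f.HasSurfaceChoice ∨ g.HasSurfaceChoice
  | .or f g => f.HasSurfaceChoice ∨ g.HasSurfaceChoice
  | .cand _ _ => True
  | .cor _ _ => True
  | _ => False

/-- The number of surface occurrences of general atoms of polarity `occ`, in a context of
polarity `pol`. -/
def GF.gatomCount (occ pol : Bool) : GF → ℕ
  | .gatom _ => if pol = occ then 1 else 0
  | .neg f => f.gatomCount occ (!pol)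
  | .and f g => f.gatomCount occ pol + g.gatomCount occ pol
  | .or f g => f.gatomCount occ pol + g.gatomCount occ pol
  | _ => 0

theorem RuleAPrem.hasSurfaceChoice {pol : Bool} {f h : GF} (r : RuleAPrem pol f h) :
    f.HasSurfaceChoice := by
  induction r <;> simp_all [GF.HasSurfaceChoice]

theorem RuleBPrem.hasSurfaceChoice {pol : Bool} {f h : GF} (r : RuleBPrem pol f h) :
    f.HasSurfaceChoice := by
  induction r <;> simp_all [GF.HasSurfaceChoice]

section RepG

variable {P q : ℕ} {occ pol : Bool} {f g : GF}

theorem RepG.hasSurfaceChoice_iff (r : RepG P q occ pol f g) :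
    g.HasSurfaceChoice ↔ f.HasSurfaceChoice := by
  induction r <;> simp_all [GF.HasSurfaceChoice]

theorem RepG.gatomCount_eq_succ (r : RepG P q occ pol f g) :
    f.gatomCount occ pol = g.gatomCount occ pol + 1 := by
  induction r <;> simp_all [GF.gatomCount] <;> omega

theorem RepG.gatomCount_not (r : RepG P q occ pol f g) :
    f.gatomCount (!occ) pol = g.gatomCount (!occ) pol := by
  induction r <;> simp_all [GF.gatomCount]

/-- The replaced occurrence is elementarized to `!occ`, so a valuation giving `q` that value
does not see the replacement. -/
theorem RepG.eval_elem {v : ℕ → Bool} (r : RepG P q occ pol f g) (hq : v q = !occ) :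
    (GF.elem pol g).eval v = (GF.elem pol f).eval v := by
  induction r with
  | here => cases occ <;> simp_all [GF.elem, GF.eval]
  | _ => simp_all [GF.elem, GF.eval]

end RepG

theorem CL2Prov.of_stable {f : GF} (hc : ¬ f.HasSurfaceChoice) (hs : f.Stable) : CL2Prov f :=
  .ruleA hs fun _ r => absurd r.hasSurfaceChoice hc

theorem CL2Prov.stable_of_gatomCount_eq_zero {f : GF} (hc : ¬ f.HasSurfaceChoice)
    (hcount : f.gatomCount true true = 0 ∨ f.gatomCount false true = 0) (h : CL2Prov f) :
    f.Stable := by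
  cases h with
  | ruleA hs _ => exact hs
  | ruleB r _ => exact absurd r.hasSurfaceChoice hc
  | ruleC _ _ _ rPos rNeg _ =>
    have := rPos.gatomCount_eq_succ
    have := rPos.gatomCount_not
    have := rNeg.gatomCount_eq_succ
    simp_all

theorem not_cl2Prov_of_not_stable {f : GF} (hc : ¬ f.HasSurfaceChoice)
    (hcount : f.gatomCount true true = 0 ∨ f.gatomCount false true = 0) (hs : ¬ f.Stable) :
    ¬ CL2Prov f :=
  fun h => hs (h.stable_of_gatomCount_eq_zero hc hcount)

theorem cl2Prov_gatom_imp_self (P : ℕ) : CL2Prov (GF.imp (.gatom P) (.gatom P)) :=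
  .ruleC P 0 (by simp [GF.imp, GF.OccursE]) (.orr _ (.here true)) (.orl _ (.negc (.here false)))
    (.of_stable (by simp [GF.HasSurfaceChoice]) fun v => by simp [GF.elem, GF.eval])

theorem RepG.imp_gatom_and_inv {P P' q : ℕ} {g : GF}
    (r : RepG P' q true true (GF.imp (.gatom P) (GF.and (.gatom P) (.gatom P))) g) :
    g = GF.imp (.gatom P) (GF.and (.eatom q) (.gatom P)) ∨
      g = GF.imp (.gatom P) (GF.and (.gatom P) (.eatom q)) := by
  cases r with
  | orl _ r => cases r with | negc r => cases r
  | orr _ r =>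
    cases r with
    | andl _ r => cases r; exact .inl rfl
    | andr _ r => cases r; exact .inr rfl

theorem not_cl2Prov_gatom_imp_and (P : ℕ) :
    ¬ CL2Prov (GF.imp (.gatom P) (GF.and (.gatom P) (.gatom P))) := by
  intro h
  cases h with
  | ruleA hs _ => simpa [GF.imp, GF.elem, GF.eval] using hs fun _ => true
  | ruleB r _ => simpa [GF.imp, GF.HasSurfaceChoice] using r.hasSurfaceChoice
  | @ruleC _ g f' _ q _ rPos rNeg hf' =>
    have hg := rPos.imp_gatom_and_inv
    have hc : ¬ f'.HasSurfaceChoice := by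
      rw [rNeg.hasSurfaceChoice_iff]
      rcases hg with rfl | rfl <;> simp [GF.imp, GF.HasSurfaceChoice]
    -- the single negative occurrence of `P` has been used up
    have hcount : f'.gatomCount false true = 0 := by
      have := rNeg.gatomCount_eq_succ
      rcases hg with rfl | rfl <;> simp_all [GF.imp, GF.gatomCount]
    refine not_cl2Prov_of_not_stable hc (.inr hcount) (fun hs => ?_) hf'
    have hv := (rNeg.eval_elem (v := fun _ => true) rfl).symm.trans (hs _)
    rcases hg with rfl | rfl <;> simp [GF.imp, GF.elem, GF.eval] at hv

theorem not_cl2Prov_gatom_cor_neg (P : ℕ) :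
    ¬ CL2Prov (GF.cor (.gatom P) (GF.neg (.gatom P))) := by
  intro h
  cases h with
  | ruleA hs _ => simpa [GF.elem, GF.eval] using hs fun _ => true
  | ruleC _ _ _ rPos _ _ => cases rPos
  | ruleB r h =>
    cases r with
    | cor1 =>
      exact not_cl2Prov_of_not_stable (by simp [GF.HasSurfaceChoice]) (.inr rfl)
        (fun hs => by simpa [GF.elem, GF.eval] using hs fun _ => true) h
    | cor2 =>
      exact not_cl2Prov_of_not_stable (by simp [GF.HasSurfaceChoice]) (.inl rfl)
        (fun hs => by simpa [GF.elem, GF.eval] using hs fun _ => true) h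

/-- For a general atom `P`: CL2 proves `P∧P→P`, `P∨¬P` and `P→P⊓P`, but does not
prove `P→P∧P` and does not prove `P⊔¬P`. -/
theorem cl2_example (P : ℕ) :
    CL2Prov (GF.imp (GF.and (.gatom P) (.gatom P)) (.gatom P)) ∧
    CL2Prov (GF.or (.gatom P) (GF.neg (.gatom P))) ∧
    CL2Prov (GF.imp (.gatom P) (GF.cand (.gatom P) (.gatom P))) ∧
    ¬ CL2Prov (GF.imp (.gatom P) (GF.and (.gatom P) (.gatom P))) ∧
    ¬ CL2Prov (GF.cor (.gatom P) (GF.neg (.gatom P))) := by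
  refine ⟨?_, ?_, ?_, not_cl2Prov_gatom_imp_and P, not_cl2Prov_gatom_cor_neg P⟩
  · exact .ruleC P 0 (by simp [GF.imp, GF.OccursE]) (.orr _ (.here true))
      (.orl _ (.negc (.andl _ (.here false))))
      (.of_stable (by simp [GF.HasSurfaceChoice]) fun v => by simp [GF.elem, GF.eval])
  · exact .ruleC P 0 (by simp [GF.OccursE]) (.orl _ (.here true)) (.orr _ (.negc (.here false)))
      (.of_stable (by simp [GF.HasSurfaceChoice]) fun v => by simp [GF.elem, GF.eval])
  · refine .ruleA (fun v => by simp [GF.imp, GF.elem, GF.eval]) fun h r => ?_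
    cases r with
    | orl _ r => cases r with | negc r => cases r
    | orr _ r => cases r <;> exact cl2Prov_gatom_imp_self P

end CoL
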